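/- arXiv:2212.10041 — 2 statements merged into one kernel-verified Lean document; each statement's English description precedes it below -/
import Mathlib

section
/- Let M₁, M₂ be Γ-semigroups and T : M₁ → P*(M₂) a set-valued anti-homomorphism with T(x) ≠ ∅ for all x. If B is a bi-ideal of M₂ (BΓB ⊆ B and BΓM₂ΓB ⊆ B) and T̄(B) is nonempty, then T̄(B) is a bi-ideal of M₁: T̄(B)ΓT̄(B) ⊆ T̄(B) and T̄(B)ΓM₁ΓT̄(B) ⊆ T̄(B). -/
/-- Product of two subsets of a Γ-semigroup: XΓY = {xγy}. -/
def gprod {M G : Type} (mul : M → G → M → M) (X Y : Set M) : Set M :=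
  {z | ∃ x ∈ X, ∃ y ∈ Y, ∃ γ : G, z = mul x γ y}

/-- Product UαV of two subsets with a fixed γ. -/
def aprod {M G : Type} (mul : M → G → M → M) (U : Set M) (γ : G) (V : Set M) : Set M :=
  {z | ∃ u ∈ U, ∃ v ∈ V, z = mul u γ v}

/-- Upper approximation. -/
def upperApprox {A B : Type} (T : A → Set B) (S : Set B) : Set A :=
  {x | (T x ∩ S).Nonempty}

/-- Lower approximation. -/
def lowerApprox {A B : Type} (T : A → Set B) (S : Set B) : Set A :=
  {x | T x ⊆ S}

/-! A witness of `x ∈ T̄(B)` is a point of `T x ∩ B`; the anti-homomorphism property multiplies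
witnesses in reverse order, and the bi-ideal property of `B` keeps the product in `B`. For the
middle factor `m` of `xαmβy` any point of `T m` serves, which is where `T m ≠ ∅` enters. -/

section UpperApprox

variable {M1 M2 G : Type} {mul1 : M1 → G → M1 → M1} {mul2 : M2 → G → M2 → M2}
  {T : M1 → Set M2}

theorem mul_mem_of_anti
    (hanti : ∀ (a b : M1) (α : G), aprod mul2 (T b) α (T a) ⊆ T (mul1 a α b))
    {a b : M1} {s u : M2} (hs : s ∈ T b) (hu : u ∈ T a) (α : G) :
    mul2 s α u ∈ T (mul1 a α b) :=
  hanti a b α ⟨s, hs, u, hu, rfl⟩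

theorem gprod_upperApprox_subset
    (hanti : ∀ (a b : M1) (α : G), aprod mul2 (T b) α (T a) ⊆ T (mul1 a α b))
    {B : Set M2} (hB : gprod mul2 B B ⊆ B) :
    gprod mul1 (upperApprox T B) (upperApprox T B) ⊆ upperApprox T B := by
  rintro _ ⟨x, ⟨u, huT, huB⟩, y, ⟨s, hsT, hsB⟩, γ, rfl⟩
  exact ⟨mul2 s γ u, mul_mem_of_anti hanti hsT huT γ, hB ⟨s, hsB, u, huB, γ, rfl⟩⟩

theorem gprod_gprod_univ_upperApprox_subset
    (hassoc : ∀ (a b c : M1) (α β : G), mul1 (mul1 a α b) β c = mul1 a α (mul1 b β c))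
    (hT : ∀ x, (T x).Nonempty)
    (hanti : ∀ (a b : M1) (α : G), aprod mul2 (T b) α (T a) ⊆ T (mul1 a α b))
    {B : Set M2} (hB : gprod mul2 (gprod mul2 B Set.univ) B ⊆ B) :
    gprod mul1 (gprod mul1 (upperApprox T B) Set.univ) (upperApprox T B) ⊆ upperApprox T B := by
  rintro _ ⟨_, ⟨x, ⟨u, huT, huB⟩, m, -, α, rfl⟩, y, ⟨s, hsT, hsB⟩, β, rfl⟩
  obtain ⟨t, htT⟩ := hT m
  have hstT : mul2 s β t ∈ T (mul1 m β y) := mul_mem_of_anti hanti hsT htT β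
  have hstB : mul2 s β t ∈ gprod mul2 B Set.univ := ⟨s, hsB, t, Set.mem_univ t, β, rfl⟩
  refine ⟨mul2 (mul2 s β t) α u, ?_, hB ⟨_, hstB, u, huB, α, rfl⟩⟩
  rw [hassoc]
  exact mul_mem_of_anti hanti hstT huT α

end UpperApprox

theorem stmt10_general {M1 M2 G : Type} (mul1 : M1 → G → M1 → M1) (mul2 : M2 → G → M2 → M2)
    (hG1 : ∀ (a b c : M1) (α β : G), mul1 (mul1 a α b) β c = mul1 a α (mul1 b β c))
    (T : M1 → Set M2) (hT : ∀ x, (T x).Nonempty)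
    (hanti : ∀ (a b : M1) (α : G), aprod mul2 (T b) α (T a) ⊆ T (mul1 a α b)) (B : Set M2)
    (hB1 : gprod mul2 B B ⊆ B) (hB2 : gprod mul2 (gprod mul2 B Set.univ) B ⊆ B) :
    gprod mul1 (upperApprox T B) (upperApprox T B) ⊆ upperApprox T B ∧
      gprod mul1 (gprod mul1 (upperApprox T B) Set.univ) (upperApprox T B) ⊆ upperApprox T B :=
  ⟨gprod_upperApprox_subset hanti hB1, gprod_gprod_univ_upperApprox_subset hG1 hT hanti hB2⟩

theorem stmt10 {M1 M2 G : Type} (mul1 : M1 → G → M1 → M1) (mul2 : M2 → G → M2 → M2)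
    (hG1 : ∀ (a b c : M1) (α β : G), mul1 (mul1 a α b) β c = mul1 a α (mul1 b β c))
    (hG2 : ∀ (a b c : M2) (α β : G), mul2 (mul2 a α b) β c = mul2 a α (mul2 b β c))
    (T : M1 → Set M2) (hT : ∀ x, (T x).Nonempty)
    (hanti : ∀ (a b : M1) (α : G), aprod mul2 (T b) α (T a) ⊆ T (mul1 a α b)) (B : Set M2) (hB0 : B.Nonempty)
    (hB1 : gprod mul2 B B ⊆ B) (hB2 : gprod mul2 (gprod mul2 B Set.univ) B ⊆ B)
    (hne : (upperApprox T B).Nonempty) :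
    gprod mul1 (upperApprox T B) (upperApprox T B) ⊆ upperApprox T B ∧
      gprod mul1 (gprod mul1 (upperApprox T B) Set.univ) (upperApprox T B) ⊆ upperApprox T B :=
  stmt10_general mul1 mul2 hG1 T hT hanti B hB1 hB2
end

section
/- Let M₁, M₂ be Γ-semigroups and T : M₁ → P*(M₂) a strong set-valued anti-homomorphism. If J is an interior ideal of M₂ and T_(J) is nonempty, then T_(J) is an interior ideal of M₁: M₁ΓT_(J)ΓM₁ ⊆ T_(J). -/
section GammaProducts

variable {M G : Type} {mul : M → G → M → M}

theorem gprod_mono {X X' Y Y' : Set M} (hX : X ⊆ X') (hY : Y ⊆ Y') :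
    gprod mul X Y ⊆ gprod mul X' Y' := by
  rintro _ ⟨x, hx, y, hy, γ, rfl⟩
  exact ⟨x, hX hx, y, hY hy, γ, rfl⟩

theorem aprod_aprod_subset_gprod_univ
    (assoc : ∀ (a b c : M) (α β : G), mul (mul a α b) β c = mul a α (mul b β c))
    (U V W : Set M) (α β : G) :
    aprod mul U β (aprod mul V α W) ⊆ gprod mul (gprod mul Set.univ V) Set.univ := by
  rintro _ ⟨u, -, _, ⟨v, hv, w, -, rfl⟩, rfl⟩
  exact ⟨mul u β v, ⟨u, trivial, v, hv, β, rfl⟩, w, trivial, α, (assoc u v w β α).symm⟩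

end GammaProducts

theorem stmt13_general {M1 M2 G : Type} (mul1 : M1 → G → M1 → M1) (mul2 : M2 → G → M2 → M2)
    (hG2 : ∀ (a b c : M2) (α β : G), mul2 (mul2 a α b) β c = mul2 a α (mul2 b β c))
    (T : M1 → Set M2)
    (hstrong : ∀ (a b : M1) (α : G), T (mul1 a α b) = aprod mul2 (T b) α (T a)) (J : Set M2)
    (hJ2 : gprod mul2 (gprod mul2 Set.univ J) Set.univ ⊆ J) :
    gprod mul1 (gprod mul1 Set.univ (lowerApprox T J)) Set.univ ⊆ lowerApprox T J := by
  rintro _ ⟨_, ⟨a, -, j, hj, α, rfl⟩, c, -, β, rfl⟩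
  have hT : T (mul1 (mul1 a α j) β c) = aprod mul2 (T c) β (aprod mul2 (T j) α (T a)) := by
    rw [hstrong, hstrong]
  show T _ ⊆ J
  rw [hT]
  calc aprod mul2 (T c) β (aprod mul2 (T j) α (T a))
      ⊆ gprod mul2 (gprod mul2 Set.univ (T j)) Set.univ
        := aprod_aprod_subset_gprod_univ hG2 _ _ _ _ _
    _ ⊆ gprod mul2 (gprod mul2 Set.univ J) Set.univ
        := gprod_mono (gprod_mono subset_rfl hj) subset_rfl
    _ ⊆ J := hJ2

theorem stmt13 {M1 M2 G : Type} (mul1 : M1 → G → M1 → M1) (mul2 : M2 → G → M2 → M2)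
    (hG1 : ∀ (a b c : M1) (α β : G), mul1 (mul1 a α b) β c = mul1 a α (mul1 b β c))
    (hG2 : ∀ (a b c : M2) (α β : G), mul2 (mul2 a α b) β c = mul2 a α (mul2 b β c))
    (T : M1 → Set M2) (hT : ∀ x, (T x).Nonempty)
    (hstrong : ∀ (a b : M1) (α : G), T (mul1 a α b) = aprod mul2 (T b) α (T a)) (J : Set M2) (hJ0 : J.Nonempty)
    (hJ1 : gprod mul2 J J ⊆ J) (hJ2 : gprod mul2 (gprod mul2 Set.univ J) Set.univ ⊆ J)
    (hne : (lowerApprox T J).Nonempty) :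
    gprod mul1 (gprod mul1 Set.univ (lowerApprox T J)) Set.univ ⊆ lowerApprox T J :=
  stmt13_general mul1 mul2 hG2 T hstrong J hJ2
end
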